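/- Let G(T) = ![![-8, 8], ![8, -8]] and G(W) = ![![-3, 1, 2], ![1, -3, 2], ![2, 2, -4]] be integer matrices. For every abelian group A, the map π(a,b,c) = (a,c) restricts to a group isomorphism from {(a,b,c) ∈ A³ : G(W)·(a,b,c) = 0} onto {(x,y) ∈ A² : G(T)·(x,y) = 0}. -/
import Mathlib

def actHom {n : ℕ} (G : Matrix (Fin n) (Fin n) ℤ) (A : Type*) [AddCommGroup A] :
    (Fin n → A) →+ (Fin n → A) where
  toFun v := fun i => ∑ j, G i j • v j
  map_zero' := by funext i; simp
  map_add' v w := by funext i; simp [smul_add, Finset.sum_add_distrib]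

def GT : Matrix (Fin 2) (Fin 2) ℤ := !![-8, 8; 8, -8]

def GW : Matrix (Fin 3) (Fin 3) ℤ := !![-3, 1, 2; 1, -3, 2; 2, 2, -4]

lemma memGW {A : Type*} [AddCommGroup A] (v : Fin 3 → A) : v ∈ (actHom GW A).ker ↔
    ((-3:ℤ) • v 0 + (v 1 + (2:ℤ) • v 2) = 0 ∧
     v 0 + ((-3:ℤ) • v 1 + (2:ℤ) • v 2) = 0 ∧
     (2:ℤ) • v 0 + ((2:ℤ) • v 1 + (-4:ℤ) • v 2) = 0) := by
  simp [AddMonoidHom.mem_ker, actHom, GW, funext_iff, Fin.forall_fin_succ,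
    Fin.sum_univ_succ]

lemma memGT {A : Type*} [AddCommGroup A] (v : Fin 2 → A) : v ∈ (actHom GT A).ker ↔
    ((-8:ℤ) • v 0 + (8:ℤ) • v 1 = 0 ∧ (8:ℤ) • v 0 + (-8:ℤ) • v 1 = 0) := by
  simp [AddMonoidHom.mem_ker, actHom, GT, funext_iff, Fin.forall_fin_succ,
    Fin.sum_univ_succ]

/-- The projection `(a,b,c) ↦ (a,c)` restricts to an isomorphism
`ker_A G(W) ≃ ker_A G(T)` for every abelian group `A`. -/
theorem whitehead_torus_kernel_iso (A : Type*) [AddCommGroup A] :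
    ∃ e : (actHom GW A).ker ≃+ (actHom GT A).ker,
      ∀ x : (actHom GW A).ker, (e x : Fin 2 → A) = ![(x : Fin 3 → A) 0, (x : Fin 3 → A) 2] := by
  refine ⟨{
    toFun := fun x => ⟨![(x : Fin 3 → A) 0, (x : Fin 3 → A) 2], by
      obtain ⟨h1, h2, h3⟩ := (memGW _).1 x.2
      rw [memGT]
      refine ⟨?_, ?_⟩ <;> simp only [Matrix.cons_val_zero, Matrix.cons_val_one, Matrix.head_cons]
      · linear_combination (norm := module) (3:ℤ) • h1 + h2
      · linear_combination (norm := module) (-3:ℤ) • h1 - h2⟩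
    invFun := fun y => ⟨![(y : Fin 2 → A) 0,
        (3:ℤ) • (y : Fin 2 → A) 0 - (2:ℤ) • (y : Fin 2 → A) 1, (y : Fin 2 → A) 1], by
      obtain ⟨h1, h2⟩ := (memGT _).1 y.2
      rw [memGW]
      refine ⟨?_, ?_, ?_⟩ <;>
        simp only [Matrix.cons_val_zero, Matrix.cons_val_one, Matrix.head_cons,
          Matrix.cons_val_two, Matrix.tail_cons]
      · module
      · linear_combination (norm := module) h1
      · linear_combination (norm := module) h2⟩
    left_inv := fun x => by
      obtain ⟨h1, h2, h3⟩ := (memGW _).1 x.2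
      ext i
      fin_cases i
      · rfl
      · show (3:ℤ) • (x : Fin 3 → A) 0 - (2:ℤ) • (x : Fin 3 → A) 2 = (x : Fin 3 → A) 1
        linear_combination (norm := module) -h1
      · rfl
    right_inv := fun y => by
      ext i
      fin_cases i <;> rfl
    map_add' := fun x y => by
      ext i
      fin_cases i <;> rfl }, fun x => rfl⟩
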